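/- The element t_{12} ∈ t_{g,n} is central in the Lie subalgebra G generated by the elements v^1 + v^2 (v ∈ V) and v^k (v ∈ V, k ≥ 3). -/

import Mathlib

open scoped BigOperators

noncomputable section

/-- The symplectic vector space of dimension `2g`: pairs `(p, q)` of coordinate vectors. -/
abbrev SpV (g : ℕ) := (Fin g → ℂ) × (Fin g → ℂ)

/-- The standard symplectic form on `SpV g`, with `⟨x_a, y_b⟩ = δ_{ab}`. -/
def sympl (g : ℕ) (v w : SpV g) : ℂ := ∑ a : Fin g, (v.1 a * w.2 a - v.2 a * w.1 a)

/-- The basis vector `x_a` of the symplectic vector space. -/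
def bX (g : ℕ) (a : Fin g) : SpV g := (Pi.single a 1, 0)

/-- The basis vector `y_a` of the symplectic vector space. -/
def bY (g : ℕ) (a : Fin g) : SpV g := (0, Pi.single a 1)

/-- A realization of the generators and defining relations of the Lie algebra `t_{g,n}`
in a complex Lie algebra `L`: linear maps `v ↦ v^i` and elements `t_{ij}` satisfying
`[v^i, w^j] = ⟨v,w⟩ t_{ij}` for `i ≠ j`, `∑_a [x_a^i, y_a^i] = - ∑_{j ≠ i} t_{ij}`, and
`[v^i, t_{jk}] = 0` for `i, j, k` distinct. -/
structure TRel (g n : ℕ) (L : Type*) [LieRing L] [LieAlgebra ℂ L] where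
  ι : Fin n → SpV g →ₗ[ℂ] L
  t : Fin n → Fin n → L
  rel_pair : ∀ i j : Fin n, i ≠ j → ∀ v w : SpV g, ⁅ι i v, ι j w⁆ = sympl g v w • t i j
  rel_surf : ∀ i : Fin n,
    (∑ a : Fin g, ⁅ι i (bX g a), ι i (bY g a)⁆)
      = - ∑ j ∈ Finset.univ.filter (fun j => j ≠ i), t i j
  rel_cent : ∀ i j k : Fin n, i ≠ j → i ≠ k → j ≠ k → ∀ v : SpV g, ⁅ι i v, t j k⁆ = 0

/-!
The centralizer of `t₁₂` is a Lie subalgebra, so it suffices to check the generators. The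
generators `v^k`, `k ≥ 3`, commute with `t₁₂` by a defining relation. For `v¹ + v²`, bracket
`v²` with the surface relation `∑ₐ [x_a¹, y_a¹] = -∑_{j ≠ 1} t_{1j}`: the right-hand side gives
`-[v², t₁₂]`, while the Jacobi identity and `[v², w¹] = ⟨v, w⟩ t₂₁` turn the left-hand side into
`[v¹, t₂₁]`. Since `t₂₁ = t₁₂` as soon as `g > 0` (and `V = 0` otherwise), this gives
`[v¹ + v², t₁₂] = 0`.
-/

section Centralizer

variable (R : Type*) {L : Type*} [CommRing R] [LieRing L] [LieAlgebra R L]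

def lieCentralizer (c : L) : LieSubalgebra R L where
  carrier := {z | ⁅z, c⁆ = 0}
  add_mem' {x y} hx hy := by simp_all [add_lie]
  zero_mem' := zero_lie c
  smul_mem' r x hx := by simp_all [smul_lie]
  lie_mem' {x y} hx hy := by simp_all [lie_lie]

variable {R}

@[simp]
theorem mem_lieCentralizer {c z : L} : z ∈ lieCentralizer R c ↔ ⁅z, c⁆ = 0 := Iff.rfl

end Centralizer

section Symplectic

variable {g : ℕ}

@[simp]
theorem sympl_bX_right (v : SpV g) (a : Fin g) : sympl g v (bX g a) = -v.2 a := by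
  simp [sympl, bX, Pi.single_apply, mul_comm]

@[simp]
theorem sympl_bY_right (v : SpV g) (a : Fin g) : sympl g v (bY g a) = v.1 a := by
  simp [sympl, bY, Pi.single_apply, mul_comm]

theorem sympl_bX_bY (a : Fin g) : sympl g (bX g a) (bY g a) = 1 := by
  simp [sympl, bX, bY, Pi.single_apply]

theorem sympl_bY_bX (a : Fin g) : sympl g (bY g a) (bX g a) = -1 := by
  simp [sympl, bX, bY, Pi.single_apply]

theorem sum_smul_bX_add_smul_bY (v : SpV g) :
    ∑ a : Fin g, (v.1 a • bX g a + v.2 a • bY g a) = v := by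
  ext b <;> simp [bX, bY, Prod.fst_sum, Prod.snd_sum, Finset.sum_apply, Pi.single_apply]

end Symplectic

namespace TRel

variable {g n : ℕ} {L : Type*} [LieRing L] [LieAlgebra ℂ L] (D : TRel g n L) {i j : Fin n}

def surfaceSum (i : Fin n) : L := ∑ a : Fin g, ⁅D.ι i (bX g a), D.ι i (bY g a)⁆

theorem t_swap [Nonempty (Fin g)] (hij : i ≠ j) : D.t j i = D.t i j := by
  obtain ⟨a⟩ := ‹Nonempty (Fin g)›
  calc D.t j i = -⁅D.ι j (bY g a), D.ι i (bX g a)⁆ := by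
        rw [D.rel_pair j i hij.symm, sympl_bY_bX, neg_one_smul, neg_neg]
    _ = ⁅D.ι i (bX g a), D.ι j (bY g a)⁆ := lie_skew _ _
    _ = D.t i j := by rw [D.rel_pair i j hij, sympl_bX_bY, one_smul]

theorem lie_ι_surfaceSum_eq_neg_lie_t (hij : i ≠ j) (v : SpV g) :
    ⁅D.ι j v, D.surfaceSum i⁆ = -⁅D.ι j v, D.t i j⁆ := by
  rw [surfaceSum, D.rel_surf i, lie_neg, lie_sum, neg_inj]
  refine Finset.sum_eq_single_of_mem j (by simpa using hij.symm) fun k hk hkj => ?_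
  exact D.rel_cent j i k hij.symm (Ne.symm hkj) (Finset.mem_filter.mp hk).2.symm v

theorem lie_ι_surfaceSum_eq_lie_t (hij : i ≠ j) (v : SpV g) :
    ⁅D.ι j v, D.surfaceSum i⁆ = ⁅D.ι i v, D.t j i⁆ := by
  have hterm : ∀ a, ⁅D.ι j v, ⁅D.ι i (bX g a), D.ι i (bY g a)⁆⁆
      = ⁅D.ι i (v.1 a • bX g a + v.2 a • bY g a), D.t j i⁆ := fun a => by
    rw [leibniz_lie, D.rel_pair j i hij.symm, D.rel_pair j i hij.symm, sympl_bX_right,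
      sympl_bY_right]
    simp only [map_add, map_smul, smul_lie, lie_smul, add_lie]
    rw [← lie_skew (D.ι i (bY g a)), neg_smul, smul_neg, add_comm]
  rw [surfaceSum, lie_sum, Finset.sum_congr rfl fun a _ => hterm a, ← sum_lie, ← map_sum,
    sum_smul_bX_add_smul_bY]

theorem lie_ι_add_ι_t (hij : i ≠ j) (v : SpV g) : ⁅D.ι i v + D.ι j v, D.t i j⁆ = 0 := by
  cases isEmpty_or_nonempty (Fin g) with
  | inl _ => simp [Subsingleton.elim v 0]
  | inr _ =>
    have h := (D.lie_ι_surfaceSum_eq_lie_t hij v).symm.trans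
      (D.lie_ι_surfaceSum_eq_neg_lie_t hij v)
    rw [D.t_swap hij] at h
    rw [add_lie, h, neg_add_cancel]

end TRel

/-- The element `t_{12} ∈ t_{g,n}` is central in the Lie subalgebra `G`
generated by the elements `v^1 + v^2` (`v ∈ V`) and `v^k` (`v ∈ V`, `k ≥ 3`): every element
of `G` commutes with `t_{12}`. -/
theorem t12_central_in_G {g n : ℕ} (hn : 2 ≤ n) {L : Type*} [LieRing L] [LieAlgebra ℂ L]
    (D : TRel g n L) :
    ∀ z ∈ LieSubalgebra.lieSpan ℂ L
      ({z | ∃ v : SpV g, z = D.ι ⟨0, by omega⟩ v + D.ι ⟨1, by omega⟩ v} ∪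
       {z | ∃ (v : SpV g) (k : Fin n),
          k ≠ ⟨0, by omega⟩ ∧ k ≠ ⟨1, by omega⟩ ∧ z = D.ι k v}),
      ⁅z, D.t ⟨0, by omega⟩ ⟨1, by omega⟩⁆ = 0 := by
  intro z hz
  have h01 : (⟨0, by omega⟩ : Fin n) ≠ ⟨1, by omega⟩ := by simp [Fin.ext_iff]
  refine mem_lieCentralizer.mp (LieSubalgebra.lieSpan_le.mpr ?_ hz)
  rintro _ (⟨v, rfl⟩ | ⟨v, k, hk0, hk1, rfl⟩)
  · exact D.lie_ι_add_ι_t h01 v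
  · exact D.rel_cent k _ _ hk0 hk1 h01 v
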